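/- Let u = min(v₁, v₂) with v₁, v₂ C¹ on an open set Ω ⊆ ℝ^m, and let x₀ ∈ Ω with v₁(x₀) = v₂(x₀). Then the superdifferential of u at x₀ equals the segment [Dv₁(x₀), Dv₂(x₀)], i.e. D⁺u(x₀) = co{Dv₁(x₀), Dv₂(x₀)}. -/

import Mathlib

/-!
Since `v₁ x₀ = v₂ x₀`, the normalised first-order remainder of `min v₁ v₂` at a slope `p` is the
minimum of those of `v₁` and `v₂`, and the remainder of `vᵢ` at `p` is an `o(1)` term plus
`⟪∇vᵢ - p, x - x₀⟫ / ‖x - x₀‖`.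

If `p = a • ∇v₁ + b • ∇v₂` is a convex combination, the minimum is at most the same convex
combination of the two remainders, in which the linear terms cancel, leaving an `o(1)` term.
Conversely, along a ray `x₀ + t • w`, `t → 0⁺`, the remainder of the minimum tends to
`min ⟪∇v₁ - p, w⟫ ⟪∇v₂ - p, w⟫ / ‖w‖`, so `limsup ≤ 0` makes this nonpositive for every `w`;
a Hahn–Banach separation of `p` from the segment then puts `p` on it.
-/

open scoped RealInnerProductSpace
open Filter Topology Set

variable {F : Type*} [NormedAddCommGroup F] [InnerProductSpace ℝ F]

noncomputable def remainderQuotient (u : F → ℝ) (x₀ p x : F) : ℝ :=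
  (u x - u x₀ - ⟪p, x - x₀⟫) / ‖x - x₀‖

def superdifferential (u : F → ℝ) (x₀ : F) : Set F :=
  {p | limsup (remainderQuotient u x₀ p) (𝓝[≠] x₀) ≤ 0}

lemma remainderQuotient_eq_add (u : F → ℝ) (x₀ g p x : F) :
    remainderQuotient u x₀ p x = remainderQuotient u x₀ g x + ⟪g - p, x - x₀⟫ / ‖x - x₀‖ := by
  simp only [remainderQuotient, inner_sub_left]
  ring

lemma remainderQuotient_min {v₁ v₂ : F → ℝ} {x₀ : F} (heq : v₁ x₀ = v₂ x₀) (p : F) :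
    remainderQuotient (fun x => min (v₁ x) (v₂ x)) x₀ p =
      fun x => min (remainderQuotient v₁ x₀ p x) (remainderQuotient v₂ x₀ p x) := by
  ext x
  simp only [remainderQuotient, min_div_div_right (norm_nonneg _), heq, min_self,
    min_sub_sub_right]

lemma abs_inner_div_norm_le (g d : F) : |⟪g, d⟫ / ‖d‖| ≤ ‖g‖ := by
  rw [abs_div, abs_norm]
  exact div_le_of_le_mul₀ (norm_nonneg _) (norm_nonneg _) (abs_real_inner_le_norm g d)

lemma min_le_convex_combination {a b x y : ℝ} (ha : 0 ≤ a) (hb : 0 ≤ b) (hab : a + b = 1) :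
    min x y ≤ a * x + b * y := by
  have : a • x + b • y ∈ segment ℝ x y := ⟨a, b, ha, hb, hab, rfl⟩
  rw [segment_eq_uIcc] at this
  exact this.1

variable [CompleteSpace F]

lemma mem_segment_of_forall_min_inner_nonpos {g₁ g₂ p : F}
    (h : ∀ w, min ⟪g₁ - p, w⟫ ⟪g₂ - p, w⟫ ≤ 0) : p ∈ segment ℝ g₁ g₂ := by
  by_contra hp
  have hcompact : IsCompact (segment ℝ g₁ g₂) := by
    rw [← convexHull_pair (𝕜 := ℝ)]
    exact (toFinite {g₁, g₂}).isCompact_convexHull ℝ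
  obtain ⟨f, c, hlt, hc⟩ :=
    geometric_hahn_banach_closed_point (convex_segment (𝕜 := ℝ) g₁ g₂) hcompact.isClosed hp
  have hpos : ∀ g ∈ segment ℝ g₁ g₂, 0 < ⟪g - p, -(InnerProductSpace.toDual ℝ F).symm f⟫ := by
    intro g hg
    rw [inner_neg_right, real_inner_comm, inner_sub_right, InnerProductSpace.toDual_symm_apply,
      InnerProductSpace.toDual_symm_apply]
    linarith [hlt g hg]
  exact (h _).not_gt
    (lt_min (hpos _ (left_mem_segment ℝ g₁ g₂)) (hpos _ (right_mem_segment ℝ g₁ g₂)))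

section
variable {u : F → ℝ} {g x₀ : F}

lemma HasGradientAt.tendsto_remainderQuotient (h : HasGradientAt u g x₀) :
    Tendsto (remainderQuotient u x₀ g) (𝓝 x₀) (𝓝 0) := by
  rw [tendsto_zero_iff_abs_tendsto_zero]
  convert hasGradientAt_iff_tendsto.1 h using 2 with x
  rw [Function.comp_apply, remainderQuotient, abs_div, abs_norm, div_eq_inv_mul, Real.norm_eq_abs]

lemma HasGradientAt.isBoundedUnder_abs_remainderQuotient (h : HasGradientAt u g x₀) (p : F) :
    IsBoundedUnder (· ≤ ·) (𝓝 x₀) fun x => |remainderQuotient u x₀ p x| := by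
  have hsmall : ∀ᶠ x in 𝓝 x₀, |remainderQuotient u x₀ g x| ≤ 1 :=
    h.tendsto_remainderQuotient.abs.eventually_le_const (by simp)
  refine isBoundedUnder_of_eventually_le (a := 1 + ‖g - p‖) ?_
  filter_upwards [hsmall] with x hx
  rw [remainderQuotient_eq_add u x₀ g p x]
  exact (abs_add_le _ _).trans (add_le_add hx (abs_inner_div_norm_le _ _))

lemma HasGradientAt.tendsto_remainderQuotient_ray (h : HasGradientAt u g x₀) (p w : F) :
    Tendsto (fun t : ℝ => remainderQuotient u x₀ p (x₀ + t • w)) (𝓝[>] 0)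
      (𝓝 (⟪g - p, w⟫ / ‖w‖)) := by
  have hray : Tendsto (fun t : ℝ => x₀ + t • w) (𝓝[>] 0) (𝓝 x₀) :=
    ((by fun_prop : Continuous fun t : ℝ => x₀ + t • w).tendsto' 0 x₀ (by simp)).mono_left
      nhdsWithin_le_nhds
  have hlim := (h.tendsto_remainderQuotient.comp hray).add_const (⟪g - p, w⟫ / ‖w‖)
  rw [Function.comp_def, zero_add] at hlim
  refine hlim.congr' ?_
  filter_upwards [self_mem_nhdsWithin] with t (ht : 0 < t)
  rw [remainderQuotient_eq_add u x₀ g p, add_sub_cancel_left, real_inner_smul_right,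
    norm_smul, Real.norm_of_nonneg ht.le, mul_div_mul_left _ _ ht.ne']

end

section
variable {v₁ v₂ : F → ℝ} {g₁ g₂ x₀ : F}

lemma isBoundedUnder_remainderQuotient_min (h₁ : HasGradientAt v₁ g₁ x₀)
    (h₂ : HasGradientAt v₂ g₂ x₀) (heq : v₁ x₀ = v₂ x₀) (p : F) :
    IsBoundedUnder (· ≤ ·) (𝓝[≠] x₀) (remainderQuotient (fun x => min (v₁ x) (v₂ x)) x₀ p) ∧
      IsBoundedUnder (· ≥ ·) (𝓝[≠] x₀) (remainderQuotient (fun x => min (v₁ x) (v₂ x)) x₀ p) := by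
  rw [← isBoundedUnder_le_abs, remainderQuotient_min heq]
  exact (((h₁.isBoundedUnder_abs_remainderQuotient p).sup
    (h₂.isBoundedUnder_abs_remainderQuotient p)).mono_le
    (Eventually.of_forall fun _ => abs_min_le_max_abs_abs)).mono nhdsWithin_le_nhds

lemma superdifferential_min_subset_segment (h₁ : HasGradientAt v₁ g₁ x₀)
    (h₂ : HasGradientAt v₂ g₂ x₀) (heq : v₁ x₀ = v₂ x₀) :
    superdifferential (fun x => min (v₁ x) (v₂ x)) x₀ ⊆ segment ℝ g₁ g₂ := by
  intro p hp
  refine mem_segment_of_forall_min_inner_nonpos fun w => ?_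
  rcases eq_or_ne w 0 with rfl | hw
  · simp
  have hray : Tendsto (fun t : ℝ => x₀ + t • w) (𝓝[>] 0) (𝓝[≠] x₀) := by
    refine tendsto_nhdsWithin_iff.2 ⟨?_, ?_⟩
    · exact ((by fun_prop : Continuous fun t : ℝ => x₀ + t • w).tendsto' 0 x₀
        (by simp)).mono_left nhdsWithin_le_nhds
    · filter_upwards [self_mem_nhdsWithin] with t (ht : 0 < t)
      simpa using ⟨ht.ne', hw⟩
  have hlim : Tendsto (remainderQuotient (fun x => min (v₁ x) (v₂ x)) x₀ p ∘
      fun t : ℝ => x₀ + t • w) (𝓝[>] 0) (𝓝 (min (⟪g₁ - p, w⟫ / ‖w‖) (⟪g₂ - p, w⟫ / ‖w‖))) := by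
    rw [remainderQuotient_min heq]
    exact (h₁.tendsto_remainderQuotient_ray p w).min (h₂.tendsto_remainderQuotient_ray p w)
  have hnonpos : min (⟪g₁ - p, w⟫ / ‖w‖) (⟪g₂ - p, w⟫ / ‖w‖) ≤ 0 := by
    rw [← hlim.limsup_eq]
    exact (hray.limsup_comp_le_limsup hlim.isCoboundedUnder_le
      (isBoundedUnder_remainderQuotient_min h₁ h₂ heq p).1).trans hp
  rw [min_div_div_right (norm_nonneg w)] at hnonpos
  simpa using (div_le_iff₀ (norm_pos_iff.2 hw)).1 hnonpos

lemma segment_subset_superdifferential_min (h₁ : HasGradientAt v₁ g₁ x₀)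
    (h₂ : HasGradientAt v₂ g₂ x₀) (heq : v₁ x₀ = v₂ x₀) :
    segment ℝ g₁ g₂ ⊆ superdifferential (fun x => min (v₁ x) (v₂ x)) x₀ := by
  rintro p ⟨a, b, ha, hb, hab, rfl⟩
  rcases (𝓝[≠] x₀).eq_or_neBot with hbot | hne
  · -- `F` is trivial; a real `limsup` along `⊥` is `sInf univ = 0`.
    simp [superdifferential, hbot, limsup_eq]
  set q := fun x => a * remainderQuotient v₁ x₀ g₁ x + b * remainderQuotient v₂ x₀ g₂ x
  have hq : Tendsto q (𝓝[≠] x₀) (𝓝 0) := by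
    simpa using ((h₁.tendsto_remainderQuotient.const_mul a).add
      (h₂.tendsto_remainderQuotient.const_mul b)).mono_left nhdsWithin_le_nhds
  have hle : ∀ x, remainderQuotient (fun x => min (v₁ x) (v₂ x)) x₀ (a • g₁ + b • g₂) x ≤ q x := by
    intro x
    rw [remainderQuotient_min heq]
    refine (min_le_convex_combination ha hb hab).trans_eq ?_
    rw [remainderQuotient_eq_add v₁ x₀ g₁, remainderQuotient_eq_add v₂ x₀ g₂]
    simp only [q, inner_sub_left, inner_add_left, real_inner_smul_left]
    linear_combination -(a * ⟪g₁, x - x₀⟫ + b * ⟪g₂, x - x₀⟫) / ‖x - x₀‖ * hab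
  rw [superdifferential, mem_ofPred_eq]
  calc _ ≤ limsup q (𝓝[≠] x₀) :=
        limsup_le_limsup (Eventually.of_forall hle)
          (isBoundedUnder_remainderQuotient_min h₁ h₂ heq _).2.isCoboundedUnder_le
          hq.isBoundedUnder_le
    _ = 0 := hq.limsup_eq

theorem superdifferential_min (h₁ : HasGradientAt v₁ g₁ x₀) (h₂ : HasGradientAt v₂ g₂ x₀)
    (heq : v₁ x₀ = v₂ x₀) :
    superdifferential (fun x => min (v₁ x) (v₂ x)) x₀ = segment ℝ g₁ g₂ :=
  (superdifferential_min_subset_segment h₁ h₂ heq).antisymm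
    (segment_subset_superdifferential_min h₁ h₂ heq)

end

theorem stmt_8 (m : ℕ) (Ω : Set (EuclideanSpace ℝ (Fin m))) (hΩ : IsOpen Ω)
    (v₁ v₂ : EuclideanSpace ℝ (Fin m) → ℝ)
    (hv₁ : ContDiffOn ℝ 1 v₁ Ω) (hv₂ : ContDiffOn ℝ 1 v₂ Ω)
    (x₀ : EuclideanSpace ℝ (Fin m)) (hx₀ : x₀ ∈ Ω)
    (heq : v₁ x₀ = v₂ x₀) :
    {p : EuclideanSpace ℝ (Fin m) |
        Filter.limsup
          (fun x => (min (v₁ x) (v₂ x) - min (v₁ x₀) (v₂ x₀) - ⟪p, x - x₀⟫) / ‖x - x₀‖)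
          (nhdsWithin x₀ {x₀}ᶜ) ≤ 0} =
      segment ℝ (gradient v₁ x₀) (gradient v₂ x₀) := by
  have hgrad : ∀ v, ContDiffOn ℝ 1 v Ω → HasGradientAt v (gradient v x₀) x₀ := fun v hv =>
    ((hv.contDiffAt (hΩ.mem_nhds hx₀)).differentiableAt one_ne_zero).hasGradientAt
  exact superdifferential_min (hgrad v₁ hv₁) (hgrad v₂ hv₂) heq
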